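/- For n≥3, there is an injective group homomorphism F_n: B(Ã_{n-1}) → B(Ã_n) sending σ_i ↦ σ_i for 1≤i≤n−1 and a_n ↦ σ_n a_{n+1} σ_n^{-1}. -/

import Mathlib

/-- Relators of the affine braid group `B(Ã_n)`: generator `some i` (`i : Fin n`)
stands for `σ_{i+1}`, and `none` stands for `a_{n+1}`. -/
def braidRelsAff (n : ℕ) : Set (FreeGroup (Option (Fin n))) :=
  { r | (∃ i j : Fin n, (i : ℕ) + 2 ≤ (j : ℕ) ∧
          r = FreeGroup.of (some i) * FreeGroup.of (some j) *
              (FreeGroup.of (some j) * FreeGroup.of (some i))⁻¹) ∨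
        (∃ i j : Fin n, (j : ℕ) = (i : ℕ) + 1 ∧
          r = FreeGroup.of (some i) * FreeGroup.of (some j) * FreeGroup.of (some i) *
              (FreeGroup.of (some j) * FreeGroup.of (some i) * FreeGroup.of (some j))⁻¹) ∨
        (∃ i : Fin n, 1 ≤ (i : ℕ) ∧ (i : ℕ) + 2 ≤ n ∧
          r = FreeGroup.of (some i) * FreeGroup.of none *
              (FreeGroup.of none * FreeGroup.of (some i))⁻¹) ∨
        (∃ i : Fin n, ((i : ℕ) = 0 ∨ (i : ℕ) + 1 = n) ∧
          r = FreeGroup.of (some i) * FreeGroup.of none * FreeGroup.of (some i) *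
              (FreeGroup.of none * FreeGroup.of (some i) * FreeGroup.of none)⁻¹) }

/-- The affine (`Ã`-type) braid group `B(Ã_n)`, with generators `σ_1, …, σ_n` and `a_{n+1}`. -/
abbrev BraidAff (n : ℕ) : Type := PresentedGroup (braidRelsAff n)

/-!
Write `m = n - 1`. The rotation `σ_1 ↦ σ_2 ↦ ⋯ ↦ σ_m ↦ a_{m+1} ↦ σ_1` of the Dynkin cycle is an
automorphism of `B(Ã_m)` of order `m + 1`; let `E = B(Ã_m) ⋊ ℤ` be the extended affine braid
group it defines. The group `B(Ã_{m+1})` acts on `{0, …, m+1} × E` by monomial permutations: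
each generator swaps two cyclically adjacent slots and multiplies the `E`-coordinate by a
cocycle, essentially the generator of `B(Ã_m)` it becomes once the strand in that slot is
forgotten, with the generator of `ℤ` appearing across the cut between the slots `m + 1` and `0`.
The image of `F` fixes the slot `m + 1` and acts there by left multiplication with the original
element of `B(Ã_m) ⊆ E`; hence `F` is injective.
-/
section BraidRelation

variable {G : Type*} [Group G] {a b c : G}

lemma braid_conj_of_commute (hab : Commute a b) (hac : a * c * a = c * a * c) :
    a * (b * c * b⁻¹) * a = b * c * b⁻¹ * a * (b * c * b⁻¹) := by
  simpa only [map_mul, MulAut.conj_apply, hab.symm.mul_inv_cancel] using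
    congrArg (MulAut.conj b) hac

lemma braid_conj_of_braid (hab : a * b * a = b * a * b) (hbc : b * c * b = c * b * c)
    (hac : Commute a c) : a * (b * c * b⁻¹) * a = b * c * b⁻¹ * a * (b * c * b⁻¹) := by
  have hbc' : b * c * b⁻¹ = c⁻¹ * b * c⁻¹⁻¹ := by
    rw [inv_inv, mul_inv_eq_iff_eq_mul, mul_assoc, mul_assoc, eq_inv_mul_iff_mul_eq, ← mul_assoc,
      ← mul_assoc, hbc]
  simpa only [map_mul, MulAut.conj_apply, hac.inv_right.symm.mul_inv_cancel, ← hbc'] using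
    congrArg (MulAut.conj c⁻¹) hab

end BraidRelation

def monomialPerm {α G : Type*} [Group G] (π : Equiv.Perm α) (v : α → G) :
    Equiv.Perm (α × G) where
  toFun x := (π x.1, v x.1 * x.2)
  invFun x := (π.symm x.1, (v (π.symm x.1))⁻¹ * x.2)
  left_inv x := by simp
  right_inv x := by simp

@[simp]
lemma monomialPerm_apply {α G : Type*} [Group G] (π : Equiv.Perm α) (v : α → G) (p : α)
    (g : G) : monomialPerm π v (p, g) = (π p, v p * g) := rfl

namespace BraidAff

variable {m : ℕ}

/-- The generator with cyclic index `k`: `σ_{k+1}` for `k < m`, and `a_{m+1}` for `k ≥ m`. -/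
def genIndex (m k : ℕ) : Option (Fin m) := if h : k < m then some ⟨k, h⟩ else none

def gen (m k : ℕ) : BraidAff m := PresentedGroup.of (genIndex m k)

lemma gen_of_lt {k : ℕ} (hk : k < m) : gen m k = PresentedGroup.of (some ⟨k, hk⟩) := by
  simp [gen, genIndex, hk]

lemma gen_self : gen m m = PresentedGroup.of none := by
  simp [gen, genIndex]

lemma of_some (i : Fin m) : (PresentedGroup.of (some i) : BraidAff m) = gen m i := by
  simp [gen_of_lt i.2]

lemma of_none : (PresentedGroup.of none : BraidAff m) = gen m m := gen_self.symm

section Relations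

variable {x y : Option (Fin m)}

lemma of_comm_of_mem
    (h : FreeGroup.of x * .of y * (.of y * .of x)⁻¹ ∈ braidRelsAff m) :
    (PresentedGroup.of x : BraidAff m) * .of y = .of y * .of x :=
  PresentedGroup.mk_eq_mk_of_mul_inv_mem h

lemma of_braid_of_mem
    (h : FreeGroup.of x * .of y * .of x * (.of y * .of x * .of y)⁻¹ ∈ braidRelsAff m) :
    (PresentedGroup.of x : BraidAff m) * .of y * .of x = .of y * .of x * .of y :=
  PresentedGroup.mk_eq_mk_of_mul_inv_mem h

lemma gen_comm {a b : ℕ} (hab : a + 2 ≤ b) (hb : b ≤ m) (hwrap : a = 0 → b < m) :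
    gen m a * gen m b = gen m b * gen m a := by
  refine of_comm_of_mem ?_
  rcases hb.lt_or_eq with hb | rfl
  · exact Or.inl ⟨⟨a, by omega⟩, ⟨b, hb⟩, hab, by simp [genIndex, hb, show a < m by omega]⟩
  · exact Or.inr <| Or.inr <| Or.inl ⟨⟨a, by omega⟩, by simp; omega, by simp; omega,
      by simp [genIndex, show a < b by omega]⟩

lemma gen_braid {k : ℕ} (hk : k < m) :
    gen m k * gen m (k + 1) * gen m k = gen m (k + 1) * gen m k * gen m (k + 1) := by
  refine of_braid_of_mem ?_
  rcases Nat.lt_or_ge (k + 1) m with hk' | hk'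
  · exact Or.inr <| Or.inl ⟨⟨k, hk⟩, ⟨k + 1, hk'⟩, rfl, by simp [genIndex, hk, hk']⟩
  · obtain rfl : m = k + 1 := by omega
    exact Or.inr <| Or.inr <| Or.inr ⟨⟨k, hk⟩, Or.inr rfl, by simp [genIndex]⟩

lemma gen_braid_wrap (hm : 0 < m) :
    gen m 0 * gen m m * gen m 0 = gen m m * gen m 0 * gen m m :=
  of_braid_of_mem <| Or.inr <| Or.inr <| Or.inr ⟨⟨0, hm⟩, Or.inl rfl, by simp [genIndex, hm]⟩

end Relations

section Rotation

lemma rotation_rels (m : ℕ) : ∀ rel ∈ braidRelsAff m,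
    FreeGroup.lift (fun x : Option (Fin m) => x.elim (gen m 0) fun i => gen m (i + 1)) rel = 1 := by
  rintro rel (⟨i, j, hij, rfl⟩ | ⟨i, j, hij, rfl⟩ | ⟨i, h1, h2, rfl⟩ | ⟨i, hi | hi, rfl⟩) <;>
    simp only [map_mul, map_inv, FreeGroup.lift_apply_of, mul_inv_eq_one, Option.elim]
  · exact gen_comm (by omega) (by omega) (by omega)
  · rw [hij]; exact gen_braid (by omega)
  · exact (gen_comm (by omega) (by omega) (by omega)).symm
  · rw [hi]; exact (gen_braid (by omega)).symm
  · rw [hi]; exact (gen_braid_wrap (by omega)).symm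

def rotation (m : ℕ) : Monoid.End (BraidAff m) := PresentedGroup.toGroup (rotation_rels m)

lemma rotation_gen_of_lt {k : ℕ} (hk : k < m) : rotation m (gen m k) = gen m (k + 1) := by
  rw [gen_of_lt hk]; exact PresentedGroup.toGroup.of _

lemma rotation_gen_self : rotation m (gen m m) = gen m 0 := by
  rw [gen_self]; exact PresentedGroup.toGroup.of _

lemma rotation_pow_gen {j k : ℕ} (h : k + j ≤ m) :
    (rotation m ^ j) (gen m k) = gen m (k + j) := by
  induction j generalizing k with
  | zero => rfl
  | succ j ih =>
    rw [pow_succ, Monoid.End.coe_mul, Function.comp_apply, rotation_gen_of_lt (by omega),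
      ih (by omega)]
    congr 1; omega

lemma rotation_pow_succ_self : rotation m ^ (m + 1) = 1 := by
  refine PresentedGroup.ext (φ := rotation m ^ (m + 1)) (ψ := MonoidHom.id _) fun x => ?_
  obtain ⟨k, hk, hx⟩ : ∃ k ≤ m, PresentedGroup.of x = gen m k := by
    rcases x with _ | i
    · exact ⟨m, le_rfl, of_none⟩
    · exact ⟨i, i.2.le, of_some i⟩
  show (rotation m ^ (m + 1)) (PresentedGroup.of x) = PresentedGroup.of x
  rw [hx, show m + 1 = k + 1 + (m - k) by omega, pow_add, pow_succ, Monoid.End.coe_mul,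
    Monoid.End.coe_mul, Function.comp_apply, Function.comp_apply, rotation_pow_gen (by omega),
    Nat.add_sub_cancel' hk, rotation_gen_self, rotation_pow_gen (by omega), zero_add]

def rotationAut (m : ℕ) : MulAut (BraidAff m) :=
  MonoidHom.toMulEquiv (rotation m) (rotation m ^ m)
    ((pow_succ (rotation m) m).symm.trans rotation_pow_succ_self)
    ((pow_succ' (rotation m) m).symm.trans rotation_pow_succ_self)

lemma rotationAut_apply (x : BraidAff m) : rotationAut m x = rotation m x := rfl

end Rotation

section Extended

abbrev Extended (m : ℕ) : Type :=
  BraidAff m ⋊[zpowersHom (MulAut (BraidAff m)) (rotationAut m)] Multiplicative ℤ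

def extGen (m k : ℕ) : Extended m := SemidirectProduct.inl (gen m k)

def extRot (m : ℕ) : Extended m := SemidirectProduct.inr (Multiplicative.ofAdd 1)

lemma extRot_mul_inl (x : BraidAff m) :
    extRot m * SemidirectProduct.inl x = SemidirectProduct.inl (rotation m x) * extRot m := by
  have h := SemidirectProduct.inl_aut (φ := zpowersHom (MulAut (BraidAff m)) (rotationAut m))
    (Multiplicative.ofAdd 1) x
  simp only [zpowersHom_apply, toAdd_ofAdd, zpow_one] at h
  rw [extRot, ← rotationAut_apply, h, map_inv, inv_mul_cancel_right]

lemma extGen_comm {a b : ℕ} (hab : a + 2 ≤ b) (hb : b ≤ m) (hwrap : a = 0 → b < m) :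
    extGen m a * extGen m b = extGen m b * extGen m a := by
  simpa only [extGen, ← map_mul] using congrArg SemidirectProduct.inl (gen_comm hab hb hwrap)

lemma extGen_braid {k l : ℕ} (hl : l = k + 1) (hlm : l ≤ m) :
    extGen m k * extGen m l * extGen m k = extGen m l * extGen m k * extGen m l := by
  subst hl
  simpa only [extGen, ← map_mul] using congrArg SemidirectProduct.inl (gen_braid hlm)

lemma extGen_braid_wrap (hm : 0 < m) :
    extGen m 0 * extGen m m * extGen m 0 = extGen m m * extGen m 0 * extGen m m := by
  simpa only [extGen, ← map_mul] using congrArg SemidirectProduct.inl (gen_braid_wrap hm)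

lemma extRot_mul_extGen {k l : ℕ} (hl : l = k + 1) (hlm : l ≤ m) :
    extRot m * extGen m k = extGen m l * extRot m := by
  rw [extGen, extRot_mul_inl, rotation_gen_of_lt (by omega), hl, extGen]

lemma extRot_mul_extGen_self : extRot m * extGen m m = extGen m 0 * extRot m := by
  rw [extGen, extRot_mul_inl, rotation_gen_self, extGen]

end Extended

section MonomialRepresentation

/-- Slots are natural numbers, of which only `0, …, m + 1` are ever moved. Seen from a slot
`p ∉ {j, j + 1}`, `σ_{j+1}` acts as the generator of `B(Ã_m)` that remains once the strand in
slot `p` is forgotten. -/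
def sigmaCocycle (m j p : ℕ) : Extended m :=
  if p < j then extGen m (j - 1) else if p < j + 2 then 1 else if p ≤ m + 1 then extGen m j
  else 1

def affCocycle (m p : ℕ) : Extended m :=
  if p = 0 then extRot m else if p ≤ m then extGen m m else if p = m + 1 then (extRot m)⁻¹
  else 1

def sigmaImage (m j : ℕ) : Equiv.Perm (ℕ × Extended m) :=
  monomialPerm (Equiv.swap j (j + 1)) (sigmaCocycle m j)

def affImage (m : ℕ) : Equiv.Perm (ℕ × Extended m) :=
  monomialPerm (Equiv.swap 0 (m + 1)) (affCocycle m)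

section Evaluation

variable {j p : ℕ}

lemma sigmaCocycle_of_lt (h : p < j) : sigmaCocycle m j p = extGen m (j - 1) := if_pos h

lemma sigmaCocycle_of_le_of_le (h1 : j ≤ p) (h2 : p ≤ j + 1) : sigmaCocycle m j p = 1 := by
  rw [sigmaCocycle, if_neg (by omega), if_pos (by omega)]

lemma sigmaCocycle_of_lt_of_le (h1 : j + 1 < p) (h2 : p ≤ m + 1) :
    sigmaCocycle m j p = extGen m j := by
  rw [sigmaCocycle, if_neg (by omega), if_neg (by omega), if_pos h2]

lemma sigmaCocycle_of_lt_of_lt (h1 : j + 1 < p) (h2 : m + 1 < p) : sigmaCocycle m j p = 1 := by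
  rw [sigmaCocycle, if_neg (by omega), if_neg (by omega), if_neg (by omega)]

lemma affCocycle_zero : affCocycle m 0 = extRot m := if_pos rfl

lemma affCocycle_of_pos_of_le (h1 : 0 < p) (h2 : p ≤ m) : affCocycle m p = extGen m m := by
  rw [affCocycle, if_neg (by omega), if_pos h2]

lemma affCocycle_succ_self : affCocycle m (m + 1) = (extRot m)⁻¹ := by
  rw [affCocycle, if_neg (by omega), if_neg (by omega), if_pos rfl]

lemma affCocycle_of_lt (h : m + 1 < p) : affCocycle m p = 1 := by
  rw [affCocycle, if_neg (by omega), if_neg (by omega), if_neg (by omega)]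

end Evaluation

attribute [local simp] Equiv.swap_apply_of_ne_of_ne sigmaCocycle_of_lt sigmaCocycle_of_le_of_le
  sigmaCocycle_of_lt_of_le sigmaCocycle_of_lt_of_lt affCocycle_zero affCocycle_of_pos_of_le
  affCocycle_succ_self affCocycle_of_lt

lemma sigmaImage_comm {i j : ℕ} (hij : i + 2 ≤ j) (hj : j ≤ m) :
    sigmaImage m i * sigmaImage m j = sigmaImage m j * sigmaImage m i := by
  refine Equiv.ext fun ⟨p, q⟩ => ?_
  simp only [Equiv.Perm.mul_apply, sigmaImage, monomialPerm_apply, Prod.mk.injEq, ← mul_assoc,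
    mul_left_inj]
  obtain h | rfl | rfl | h | rfl | rfl | h | h :
      p < i ∨ p = i ∨ p = i + 1 ∨ (i + 1 < p ∧ p < j) ∨ p = j ∨ p = j + 1 ∨
        (j + 1 < p ∧ p ≤ m + 1) ∨ m + 1 < p := by omega
  all_goals simp (disch := omega)
  all_goals exact extGen_comm (by omega) (by omega) (by omega)

lemma sigmaImage_braid {i : ℕ} (hi : i < m) :
    sigmaImage m i * sigmaImage m (i + 1) * sigmaImage m i =
      sigmaImage m (i + 1) * sigmaImage m i * sigmaImage m (i + 1) := by
  refine Equiv.ext fun ⟨p, q⟩ => ?_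
  simp only [Equiv.Perm.mul_apply, sigmaImage, monomialPerm_apply, Prod.mk.injEq, ← mul_assoc,
    mul_left_inj]
  obtain h | rfl | rfl | rfl | h | h :
      p < i ∨ p = i ∨ p = i + 1 ∨ p = i + 2 ∨ (i + 2 < p ∧ p ≤ m + 1) ∨ m + 1 < p := by omega
  all_goals simp (disch := omega)
  all_goals exact extGen_braid (by omega) (by omega)

lemma sigmaImage_comm_affImage {i : ℕ} (h1 : 1 ≤ i) (h2 : i < m) :
    sigmaImage m i * affImage m = affImage m * sigmaImage m i := by
  refine Equiv.ext fun ⟨p, q⟩ => ?_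
  simp only [Equiv.Perm.mul_apply, sigmaImage, affImage, monomialPerm_apply, Prod.mk.injEq,
    ← mul_assoc, mul_left_inj]
  obtain rfl | h | rfl | rfl | h | rfl | h :
      p = 0 ∨ (0 < p ∧ p < i) ∨ p = i ∨ p = i + 1 ∨ (i + 1 < p ∧ p ≤ m) ∨ p = m + 1 ∨
        m + 1 < p := by omega
  all_goals simp (disch := omega)
  · exact (extRot_mul_extGen (by omega) (by omega)).symm
  · exact extGen_comm (by omega) le_rfl (by omega)
  · exact extGen_comm (by omega) le_rfl (by omega)
  · exact (SemiconjBy.inv_symm_left (extRot_mul_extGen (by omega) (by omega))).symm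

lemma sigmaImage_zero_braid_affImage (hm : 0 < m) :
    sigmaImage m 0 * affImage m * sigmaImage m 0 = affImage m * sigmaImage m 0 * affImage m := by
  refine Equiv.ext fun ⟨p, q⟩ => ?_
  simp only [Equiv.Perm.mul_apply, sigmaImage, affImage, monomialPerm_apply, Prod.mk.injEq,
    ← mul_assoc, mul_left_inj]
  obtain rfl | rfl | h | rfl | h :
      p = 0 ∨ p = 1 ∨ (1 < p ∧ p ≤ m) ∨ p = m + 1 ∨ m + 1 < p := by omega
  all_goals simp (disch := omega)
  · rw [mul_assoc, ← extRot_mul_extGen_self, inv_mul_cancel_left]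
  · exact extRot_mul_extGen_self.symm
  · exact extGen_braid_wrap hm
  · exact SemiconjBy.inv_symm_left extRot_mul_extGen_self

lemma sigmaImage_self_braid_affImage (hm : 0 < m) :
    sigmaImage m m * affImage m * sigmaImage m m = affImage m * sigmaImage m m * affImage m := by
  refine Equiv.ext fun ⟨p, q⟩ => ?_
  simp only [Equiv.Perm.mul_apply, sigmaImage, affImage, monomialPerm_apply, Prod.mk.injEq,
    ← mul_assoc, mul_left_inj]
  obtain rfl | h | rfl | rfl | h :
      p = 0 ∨ (0 < p ∧ p < m) ∨ p = m ∨ p = m + 1 ∨ m + 1 < p := by omega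
  all_goals simp (disch := omega)
  · exact extRot_mul_extGen (by omega) le_rfl
  · exact extGen_braid (by omega) le_rfl
  · exact (SemiconjBy.inv_symm_left (extRot_mul_extGen (by omega) le_rfl)).symm
  · rw [extRot_mul_extGen (by omega) le_rfl, mul_inv_cancel_right]

lemma monomialRep_rels (hm : 0 < m) : ∀ rel ∈ braidRelsAff (m + 1),
    FreeGroup.lift (fun x : Option (Fin (m + 1)) => x.elim (affImage m) fun i => sigmaImage m i)
      rel = 1 := by
  rintro rel (⟨i, j, hij, rfl⟩ | ⟨i, j, hij, rfl⟩ | ⟨i, h1, h2, rfl⟩ | ⟨i, hi | hi, rfl⟩) <;>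
    simp only [map_mul, map_inv, FreeGroup.lift_apply_of, mul_inv_eq_one, Option.elim]
  · exact sigmaImage_comm hij (by omega)
  · rw [hij]; exact sigmaImage_braid (by omega)
  · exact sigmaImage_comm_affImage h1 (by omega)
  · rw [hi]; exact sigmaImage_zero_braid_affImage hm
  · rw [show (i : ℕ) = m by omega]; exact sigmaImage_self_braid_affImage hm

def monomialRep (m : ℕ) (hm : 0 < m) : BraidAff (m + 1) →* Equiv.Perm (ℕ × Extended m) :=
  PresentedGroup.toGroup (monomialRep_rels hm)

lemma monomialRep_gen_of_le (hm : 0 < m) {k : ℕ} (hk : k ≤ m) :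
    monomialRep m hm (gen (m + 1) k) = sigmaImage m k := by
  rw [gen_of_lt (by omega)]; exact PresentedGroup.toGroup.of _

lemma monomialRep_gen_succ_self (hm : 0 < m) :
    monomialRep m hm (gen (m + 1) (m + 1)) = affImage m := by
  rw [gen_self]; exact PresentedGroup.toGroup.of _

end MonomialRepresentation

section Embedding

lemma embedding_rels (hm : 1 < m) : ∀ rel ∈ braidRelsAff m,
    FreeGroup.lift (fun x : Option (Fin m) => x.elim
      (gen (m + 1) m * gen (m + 1) (m + 1) * (gen (m + 1) m)⁻¹) fun i => gen (m + 1) i)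
      rel = 1 := by
  rintro rel (⟨i, j, hij, rfl⟩ | ⟨i, j, hij, rfl⟩ | ⟨i, h1, h2, rfl⟩ | ⟨i, hi | hi, rfl⟩) <;>
    simp only [map_mul, map_inv, FreeGroup.lift_apply_of, mul_inv_eq_one, Option.elim]
  · exact gen_comm hij (by omega) (by omega)
  · rw [hij]; exact gen_braid (by omega)
  · have hs : Commute (gen (m + 1) i) (gen (m + 1) m) := gen_comm (by omega) (by omega) (by omega)
    have ha : Commute (gen (m + 1) i) (gen (m + 1) (m + 1)) :=
      gen_comm (by omega) le_rfl (by omega)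
    exact (hs.mul_right ha).mul_right hs.inv_right
  · rw [hi]
    exact braid_conj_of_commute (gen_comm (by omega) (by omega) (by omega))
      (gen_braid_wrap (by omega))
  · rw [show (i : ℕ) = m - 1 by omega]
    refine braid_conj_of_braid ?_ (gen_braid (by omega)) (gen_comm (by omega) le_rfl (by omega))
    simpa [show m - 1 + 1 = m by omega] using gen_braid (m := m + 1) (k := m - 1) (by omega)

def embedding (m : ℕ) (hm : 1 < m) : BraidAff m →* BraidAff (m + 1) :=
  PresentedGroup.toGroup (embedding_rels hm)

lemma embedding_of_some (hm : 1 < m) (i : Fin m) :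
    embedding m hm (PresentedGroup.of (some i)) = gen (m + 1) i :=
  PresentedGroup.toGroup.of _

lemma embedding_of_none (hm : 1 < m) :
    embedding m hm (PresentedGroup.of none) =
      gen (m + 1) m * gen (m + 1) (m + 1) * (gen (m + 1) m)⁻¹ :=
  PresentedGroup.toGroup.of _

lemma monomialRep_embedding_apply (hm : 1 < m) (x : BraidAff m) (q : Extended m) :
    monomialRep m (by omega) (embedding m hm x) (m + 1, q) =
      (m + 1, SemidirectProduct.inl x * q) := by
  have hx : x ∈ Subgroup.closure (Set.range PresentedGroup.of) := by simp
  induction hx using Subgroup.closure_induction generalizing q with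
  | mem y hy =>
    obtain ⟨_ | i, rfl⟩ := hy
    · have hinv : (sigmaImage m m)⁻¹ (m + 1, q) = (m, q) := by
        rw [Equiv.Perm.inv_eq_iff_eq, sigmaImage, monomialPerm_apply, Equiv.swap_apply_left,
          sigmaCocycle_of_le_of_le le_rfl (by omega), one_mul]
      rw [embedding_of_none, map_mul, map_mul, map_inv, monomialRep_gen_of_le _ le_rfl,
        monomialRep_gen_succ_self, Equiv.Perm.mul_apply, Equiv.Perm.mul_apply, hinv, affImage,
        monomialPerm_apply, Equiv.swap_apply_of_ne_of_ne (by omega) (by omega),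
        affCocycle_of_pos_of_le (by omega) le_rfl, sigmaImage, monomialPerm_apply,
        Equiv.swap_apply_left, sigmaCocycle_of_le_of_le le_rfl (by omega), one_mul, extGen,
        of_none]
    · rw [embedding_of_some, monomialRep_gen_of_le _ (by omega), sigmaImage, monomialPerm_apply,
        Equiv.swap_apply_of_ne_of_ne (by omega) (by omega),
        sigmaCocycle_of_lt_of_le (by omega) le_rfl, extGen, of_some]
  | one => simp
  | mul y z _ _ hy hz => simp only [map_mul, Equiv.Perm.mul_apply, hz, hy, mul_assoc]
  | inv y _ hy =>
    rw [map_inv, map_inv, Equiv.Perm.inv_eq_iff_eq, hy, map_inv, mul_inv_cancel_left]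

lemma embedding_injective (hm : 1 < m) : Function.Injective (embedding m hm) := by
  intro x y hxy
  have h := congrArg (fun g => monomialRep m (by omega) g (m + 1, 1)) hxy
  simp only [monomialRep_embedding_apply, Prod.mk.injEq, mul_one, true_and] at h
  exact SemidirectProduct.inl_injective h

end Embedding

end BraidAff

theorem stmt_4 (n : ℕ) (hn : 3 ≤ n) :
    ∃ F : BraidAff (n - 1) →* BraidAff n,
      Function.Injective F ∧
      (∀ i : Fin (n - 1), F (PresentedGroup.of (some i)) =
        PresentedGroup.of (some (i.castLE (by omega)))) ∧
      F (PresentedGroup.of none) =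
        PresentedGroup.of (some (⟨n - 1, by omega⟩ : Fin n)) * PresentedGroup.of none *
          (PresentedGroup.of (some (⟨n - 1, by omega⟩ : Fin n)))⁻¹ := by
  obtain ⟨m, rfl⟩ : ∃ m, n = m + 1 := ⟨n - 1, by omega⟩
  refine ⟨BraidAff.embedding m (by omega), BraidAff.embedding_injective _, fun i => ?_, ?_⟩
  · exact (BraidAff.embedding_of_some _ i).trans (BraidAff.gen_of_lt _)
  · rw [BraidAff.embedding_of_none, BraidAff.gen_of_lt (by omega), BraidAff.gen_self]
    rfl
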